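/- arXiv:quant-ph/0403108 — 3 statements merged into one kernel-verified Lean document; each statement's English description precedes it below -/
import Mathlib

section
/- Let ρ be a probability measure on ℝ. If for every nonempty open set U ⊆ ℝ one has sup_{x ∈ ℝ} ρ(x + U) = 1, then the support of ρ consists of exactly one point, i.e. ρ = δ_t for some t ∈ ℝ. -/
/-!
Any two balls of mass `> 1/2` meet, so their centres are closer than the sum of their radii.
Choosing such a ball of every radius `r > 0`, the closed balls of the same centres and radii
pairwise intersect, hence (Helly in dimension one) share a point `t`. Every ball of mass `> 1/2`
and radius `s` then has its centre within `s` of `t`, so the hypothesis `sup_x ρ(B(x, s)) = 1`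
forces `ρ(B(t, 2s)) = 1` for all `s > 0`, i.e. `ρ = δ_t`.
-/

open MeasureTheory Metric Set
open scoped ENNReal

section

variable {X : Type*} [PseudoMetricSpace X] [MeasurableSpace X]
  {μ : Measure X} [IsProbabilityMeasure μ]

theorem dist_lt_add_of_half_lt_measure_ball [OpensMeasurableSpace X] {x y : X} {r s : ℝ}
    (hx : 2⁻¹ < μ (ball x r)) (hy : 2⁻¹ < μ (ball y s)) : dist x y < r + s := by
  have hmass : μ univ < μ (ball x r) + μ (ball y s) := by
    calc μ univ = 2⁻¹ + 2⁻¹ := by rw [measure_univ, ENNReal.inv_two_add_inv_two]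
      _ < _ := ENNReal.add_lt_add hx hy
  obtain ⟨z, hzx, hzy⟩ :=
    nonempty_inter_of_measure_lt_add μ measurableSet_ball (subset_univ _) (subset_univ _) hmass
  calc dist x y ≤ dist z x + dist z y := dist_triangle_left x y z
    _ < r + s := add_lt_add hzx hzy

theorem measure_ball_eq_one_of_half_lt_measure_ball_imp_dist_le {t : X}
    (hsup : ∀ s > 0, ⨆ y, μ (ball y s) = 1)
    (ht : ∀ y s, 2⁻¹ < μ (ball y s) → dist y t ≤ s) {r : ℝ} (hr : 0 < r) :
    μ (ball t r) = 1 := by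
  refine le_antisymm prob_le_one ?_
  have hle : ∀ y, μ (ball y (r / 2)) ≤ max 2⁻¹ (μ (ball t r)) := by
    intro y
    rcases le_or_gt (μ (ball y (r / 2))) 2⁻¹ with hy | hy
    · exact le_max_of_le_left hy
    · refine le_max_of_le_right (measure_mono fun z hz => ?_)
      calc dist z t ≤ dist z y + dist y t := dist_triangle z y t
        _ < r / 2 + r / 2 := add_lt_add_of_lt_of_le hz (ht y _ hy)
        _ = r := add_halves r
  have := (hsup (r / 2) (half_pos hr)).symm.le.trans (iSup_le hle)
  rcases le_max_iff.mp this with h | h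
  · exact absurd h (not_le.mpr (ENNReal.inv_lt_one.mpr ENNReal.one_lt_two))
  · exact h

end

theorem eq_dirac_of_forall_measure_ball_eq_one {X : Type*} [MetricSpace X] [MeasurableSpace X]
    [OpensMeasurableSpace X] {μ : Measure X} [IsProbabilityMeasure μ] {t : X}
    (h : ∀ r > 0, μ (ball t r) = 1) : μ = Measure.dirac t := by
  have hball : ∀ n : ℕ, ∀ᵐ y ∂μ, dist y t < 1 / (n + 1) := fun n =>
    (prob_compl_eq_zero_iff measurableSet_ball).mpr (h _ Nat.one_div_pos_of_nat)
  have hae : ∀ᵐ y ∂μ, y = t := by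
    filter_upwards [ae_all_iff.mpr hball] with y hy
    exact eq_of_forall_dist_le fun ε hε =>
      let ⟨n, hn⟩ := exists_nat_one_div_lt hε; (hy n).le.trans hn.le
  have hsingle : μ {t} = 1 :=
    (prob_compl_eq_zero_iff (measurableSet_singleton t)).mp (ae_iff.mp hae)
  have hdecomp := (Measure.ae_mem_finset_iff (s := {t})).mp (by simpa using hae)
  rwa [Finset.sum_singleton, hsingle, one_smul] at hdecomp

/-- Helly's theorem for intervals: the supremum of the left endpoints lies in all of them. -/
theorem Real.exists_dist_le_of_dist_le_add {ι : Type*} [Nonempty ι] {x r : ι → ℝ}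
    (h : ∀ i j, dist (x i) (x j) ≤ r i + r j) : ∃ t, ∀ i, dist (x i) t ≤ r i := by
  have hle : ∀ i j, x i - r i ≤ x j + r j := fun i j => by
    linarith [(abs_le.mp ((Real.dist_eq _ _).symm.trans_le (h i j))).2]
  have hbdd : BddAbove (range fun i => x i - r i) := ⟨x (Classical.arbitrary ι) + r _, by
    rintro _ ⟨i, rfl⟩; exact hle i _⟩
  refine ⟨⨆ i, x i - r i, fun i => ?_⟩
  rw [Real.dist_eq, abs_le]
  constructor
  · linarith [ciSup_le fun j => hle j i]
  · linarith [le_ciSup hbdd i]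

theorem Real.exists_forall_dist_le_of_half_lt_measure_ball {ρ : Measure ℝ}
    [IsProbabilityMeasure ρ] (h : ∀ r > 0, ∃ x, 2⁻¹ < ρ (ball x r)) :
    ∃ t, ∀ y s, 2⁻¹ < ρ (ball y s) → dist y t ≤ s := by
  choose x hx using h
  obtain ⟨t, ht⟩ := Real.exists_dist_le_of_dist_le_add (ι := Ioi (0 : ℝ))
    (x := fun r => x r r.2) (r := (↑)) fun r r' =>
      (dist_lt_add_of_half_lt_measure_ball (hx r r.2) (hx r' r'.2)).le
  refine ⟨t, fun y s hy => le_of_forall_pos_lt_add fun ε hε => ?_⟩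
  have hε2 := half_pos hε
  calc dist y t ≤ dist y (x _ hε2) + dist (x _ hε2) t := dist_triangle _ _ _
    _ < s + ε / 2 + ε / 2 :=
      add_lt_add_of_lt_of_le (dist_lt_add_of_half_lt_measure_ball hy (hx _ hε2)) (ht ⟨_, hε2⟩)
    _ = s + ε := by ring

/-- If a probability measure `ρ` on `ℝ` satisfies `sup_x ρ(x + U) = 1` for every
nonempty open set `U`, then `ρ` is a Dirac measure at some point. -/
theorem stmt_0 (ρ : Measure ℝ) [IsProbabilityMeasure ρ]
    (h : ∀ U : Set ℝ, IsOpen U → U.Nonempty → (⨆ x : ℝ, ρ {y | y - x ∈ U}) = 1) :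
    ∃ t : ℝ, ρ = Measure.dirac t := by
  have hsup : ∀ r > 0, ⨆ x, ρ (ball x r) = 1 := fun r hr => by
    simpa [ball, Real.dist_eq] using h (ball 0 r) isOpen_ball (nonempty_ball.mpr hr)
  have hhalf : ∀ r > 0, ∃ x, 2⁻¹ < ρ (ball x r) := fun r hr =>
    lt_iSup_iff.mp ((hsup r hr).symm ▸ ENNReal.inv_lt_one.mpr ENNReal.one_lt_two)
  obtain ⟨t, ht⟩ := Real.exists_forall_dist_le_of_half_lt_measure_ball hhalf
  exact ⟨t, eq_dirac_of_forall_measure_ball_eq_one fun r hr =>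
    measure_ball_eq_one_of_half_lt_measure_ball_imp_dist_le hsup ht hr⟩
end

section
/- If ρ is a probability measure on ℝ whose support contains two distinct points x₁ ≠ x₂, then setting U = {x : |x| < |x₁ - x₂|/4}, there exists m > 0 such that for all x ∈ ℝ, ρ(x + U) ≤ 1 - m. -/
/-!
The translate `x + U` is the ball of radius `r = |x₁ - x₂| / 4` about `x`. As `x₁` and `x₂`
are `4 r` apart, this ball misses one of the `r`-balls about them, and both of those carry
positive mass because `x₁` and `x₂` lie in the support. So `m` can be the smaller of these two masses.
-/

open MeasureTheory Metric

theorem Metric.disjoint_ball_or_disjoint_ball {X : Type*} [PseudoMetricSpace X] {x₁ x₂ : X}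
    {r : ℝ} (h : 4 * r ≤ dist x₁ x₂) (x : X) :
    Disjoint (ball x r) (ball x₁ r) ∨ Disjoint (ball x r) (ball x₂ r) := by
  by_contra! hmeet
  have h₁ : dist x x₁ < 2 * r := by
    by_contra! h'
    exact hmeet.1 (ball_disjoint_ball (by linarith))
  have h₂ : dist x x₂ < 2 * r := by
    by_contra! h'
    exact hmeet.2 (ball_disjoint_ball (by linarith))
  linarith [dist_triangle_left x₁ x₂ x]

theorem MeasureTheory.measure_le_one_sub_of_disjoint {Ω : Type*} [MeasurableSpace Ω]
    {μ : Measure Ω} [IsProbabilityMeasure μ] {s t : Set Ω} (hst : Disjoint s t)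
    (ht : MeasurableSet t) : μ s ≤ 1 - μ t :=
  prob_compl_eq_one_sub (μ := μ) ht ▸ measure_mono hst.subset_compl_right

theorem MeasureTheory.exists_pos_forall_measure_ball_le_one_sub {X : Type*}
    [PseudoMetricSpace X] [MeasurableSpace X] [OpensMeasurableSpace X] (μ : Measure X)
    [IsProbabilityMeasure μ] {x₁ x₂ : X} {r : ℝ} (hdist : 4 * r ≤ dist x₁ x₂)
    (h₁ : 0 < μ (ball x₁ r)) (h₂ : 0 < μ (ball x₂ r)) :
    ∃ m : ENNReal, 0 < m ∧ ∀ x : X, μ (ball x r) ≤ 1 - m := by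
  refine ⟨min (μ (ball x₁ r)) (μ (ball x₂ r)), lt_min h₁ h₂, fun x => ?_⟩
  rcases disjoint_ball_or_disjoint_ball hdist x with hd | hd
  · exact (measure_le_one_sub_of_disjoint hd measurableSet_ball).trans
      (tsub_le_tsub_left (min_le_left _ _) _)
  · exact (measure_le_one_sub_of_disjoint hd measurableSet_ball).trans
      (tsub_le_tsub_left (min_le_right _ _) _)

/-- If the support of a probability measure `ρ` on `ℝ` contains two distinct points
`x₁ ≠ x₂`, then with `U = {x : |x| < |x₁ - x₂|/4}` there is `m > 0` such that
`ρ(x + U) ≤ 1 - m` for every `x`. -/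
theorem stmt_1 (ρ : Measure ℝ) [IsProbabilityMeasure ρ] (x₁ x₂ : ℝ) (hne : x₁ ≠ x₂)
    (h₁ : ∀ U : Set ℝ, IsOpen U → x₁ ∈ U → 0 < ρ U)
    (h₂ : ∀ U : Set ℝ, IsOpen U → x₂ ∈ U → 0 < ρ U) :
    ∃ m : ENNReal, 0 < m ∧
      ∀ x : ℝ, ρ {y | y - x ∈ {z : ℝ | |z| < |x₁ - x₂| / 4}} ≤ 1 - m := by
  have hr : 0 < |x₁ - x₂| / 4 := by
    have := abs_pos.2 (sub_ne_zero.2 hne)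
    positivity
  have hdist : 4 * (|x₁ - x₂| / 4) ≤ dist x₁ x₂ := by
    rw [Real.dist_eq]
    linarith
  exact exists_pos_forall_measure_ball_le_one_sub ρ hdist
    (h₁ _ isOpen_ball (mem_ball_self hr)) (h₂ _ isOpen_ball (mem_ball_self hr))
end

section
/- Let 0 ≤ a < b and define h₁ = (χ_{[a,b]} − χ_{[−b,−a]})/√(2(b−a)) and h₂ = (χ_{[a,b]} + χ_{[−b,−a]})/√(2(b−a)). Then h₁ and h₂ are unit vectors in L²(ℝ), and the functions h₁ ∗ h₁* and h₂ ∗ h₂* agree on the complement of [2a,2b] ∪ [−2b,−2a] but differ at some point of [2a,2b]. -/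
open MeasureTheory

/-- Convolution of two complex functions on `ℝ`. -/
noncomputable def cconv (f g : ℝ → ℂ) (x : ℝ) : ℂ := ∫ y : ℝ, f y * g (x - y)

/-- Complex indicator function of a set. -/
noncomputable def cchi (S : Set ℝ) : ℝ → ℂ := Set.indicator S fun _ => (1 : ℂ)

/-- The adjoint `h*(ξ) = conj (h(-ξ))`. -/
noncomputable def cstar (h : ℝ → ℂ) : ℝ → ℂ := fun ξ => starRingEnd ℂ (h (-ξ))

/-!
Write `P = χ_[a,b]`, `N = χ_[-b,-a]` and `h_ε = c (P + ε N)`, so `h₁ = h_{-1}`, `h₂ = h_1`.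
Since `P` and `N` are real, the integrand of `h_ε ∗ h_ε*` at `x` is
`c² (P(y) N(y-x) + N(y) P(y-x)) ε + c² (P(y) P(y-x) + ε² N(y) N(y-x))`.
The part linear in `ε` vanishes identically unless `x ∈ ([a,b] - [-b,-a]) ∪ ([-b,-a] - [a,b])
= [2a,2b] ∪ [-2b,-2a]`, so the signs `ε = ±1` give the same autocorrelation off that set.
At `x = (a + 3b)/2`, which lies in `[2a,2b]` but beyond `b - a` (unlike the peak `a + b` when
`a = 0`), every term except `ε P(y) N(y-x)` vanishes identically, and this one
integrates to `ε (b - a)/2`, so the two signs differ there. The unit norms are the case `x = 0`: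
`[a,b] ∩ [-b,-a]` is null, so `‖h_ε‖² = c² (|[a,b]| + |[-b,-a]|) = 2 c² (b - a) = 1`.
-/

open Set ComplexConjugate
open scoped Pointwise

theorem Set.Icc_sub_Icc_subset {α : Type*} [AddCommGroup α] [PartialOrder α]
    [IsOrderedAddMonoid α] (a b c d : α) : Icc a b - Icc c d ⊆ Icc (a - d) (b - c) := by
  rintro _ ⟨y, ⟨hay, hyb⟩, z, ⟨hcz, hzd⟩, rfl⟩
  exact ⟨sub_le_sub hay hzd, sub_le_sub hyb hcz⟩

section cchi

variable {S T : Set ℝ}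

@[simp]
theorem conj_cchi (y : ℝ) : conj (cchi S y) = cchi S y := by
  by_cases h : y ∈ S <;> simp [cchi, h]

theorem cchi_mul_cchi (y : ℝ) : cchi S y * cchi T y = cchi (S ∩ T) y := by
  simp only [cchi, ← inter_indicator_mul, mul_one]

theorem cchi_mul_cchi_sub_eq_zero {x : ℝ} (hx : x ∉ S - T) (y : ℝ) :
    cchi S y * cchi T (y - x) = 0 := by
  by_contra hne
  have hyS : y ∈ S := by by_contra h; simp [cchi, h] at hne
  have hyT : y - x ∈ T := by by_contra h; simp [cchi, h] at hne
  exact hx ⟨y, hyS, y - x, hyT, sub_sub_cancel y x⟩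

theorem integral_cchi (hS : MeasurableSet S) : ∫ y, cchi S y = volume.real S := by
  simp [cchi, integral_indicator_const _ hS]

theorem integrable_cchi (hS : MeasurableSet S) (hSfin : volume S ≠ ⊤) :
    Integrable (cchi S) :=
  (integrable_indicator_iff hS).2 (integrableOn_const hSfin)

end cchi

theorem cconv_cstar_apply (f g : ℝ → ℂ) (x : ℝ) :
    cconv f (cstar g) x = ∫ y, f y * conj (g (y - x)) := by
  simp only [cconv, cstar, neg_sub]

noncomputable def indicatorPair (S T : Set ℝ) (c ε : ℝ) (ξ : ℝ) : ℂ :=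
  c * (cchi S ξ + ε * cchi T ξ)

section indicatorPair

variable {S T : Set ℝ} {c ε ε' x : ℝ}

theorem indicatorPair_mul_conj (x y : ℝ) :
    indicatorPair S T c ε y * conj (indicatorPair S T c ε (y - x)) =
      c ^ 2 * (cchi S y * cchi T (y - x) + cchi T y * cchi S (y - x)) * ε +
      c ^ 2 * (cchi S y * cchi S (y - x) + ε ^ 2 * (cchi T y * cchi T (y - x))) := by
  simp only [indicatorPair, map_mul, map_add, Complex.conj_ofReal, conj_cchi]
  ring

theorem integral_norm_sq_indicatorPair (hS : MeasurableSet S) (hT : MeasurableSet T)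
    (hSfin : volume S ≠ ⊤) (hTfin : volume T ≠ ⊤) (hST : volume (S ∩ T) = 0) (hε : ε ^ 2 = 1) :
    ∫ y, ‖indicatorPair S T c ε y‖ ^ 2 = c ^ 2 * (volume.real S + volume.real T) := by
  have hpt : ∀ y, ((‖indicatorPair S T c ε y‖ ^ 2 : ℝ) : ℂ) =
      c ^ 2 * (cchi S y + cchi T y + 2 * ε * cchi (S ∩ T) y) := by
    intro y
    have := indicatorPair_mul_conj (S := S) (T := T) (c := c) (ε := ε) 0 y
    simp only [sub_zero, cchi_mul_cchi, inter_self, inter_comm T S] at this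
    rw [Complex.ofReal_pow, ← Complex.mul_conj', this, ← Complex.ofReal_pow ε, hε]
    push_cast
    ring
  apply Complex.ofReal_injective
  rw [← integral_complex_ofReal, integral_congr_ae (Filter.Eventually.of_forall hpt),
    integral_const_mul, integral_add (f := fun y => cchi S y + cchi T y)
      ((integrable_cchi hS hSfin).add (integrable_cchi hT hTfin))
      ((integrable_cchi (hS.inter hT) (by simp [hST])).const_mul _),
    integral_add (integrable_cchi hS hSfin) (integrable_cchi hT hTfin), integral_const_mul,
    integral_cchi hS, integral_cchi hT, integral_cchi (hS.inter hT),
    measureReal_def (s := S ∩ T), hST, ENNReal.toReal_zero]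
  push_cast
  ring

theorem cconv_cstar_indicatorPair_eq_of_sq_eq (hx : x ∉ (S - T) ∪ (T - S))
    (hεε' : ε ^ 2 = ε' ^ 2) :
    cconv (indicatorPair S T c ε) (cstar (indicatorPair S T c ε)) x =
      cconv (indicatorPair S T c ε') (cstar (indicatorPair S T c ε')) x := by
  rw [mem_union, not_or] at hx
  simp only [cconv_cstar_apply, indicatorPair_mul_conj, cchi_mul_cchi_sub_eq_zero hx.1,
    cchi_mul_cchi_sub_eq_zero hx.2, ← Complex.ofReal_pow, hεε']
  simp

theorem cconv_cstar_indicatorPair_eq_mul_integral (hx : x ∉ (S - S) ∪ (T - T) ∪ (T - S)) :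
    cconv (indicatorPair S T c ε) (cstar (indicatorPair S T c ε)) x =
      c ^ 2 * ε * ∫ y, cchi S y * cchi T (y - x) := by
  simp only [mem_union, not_or] at hx
  simp only [cconv_cstar_apply, indicatorPair_mul_conj, cchi_mul_cchi_sub_eq_zero hx.1.1,
    cchi_mul_cchi_sub_eq_zero hx.1.2, cchi_mul_cchi_sub_eq_zero hx.2]
  simp only [mul_zero, add_zero, ← integral_const_mul]
  congr 1 with y
  ring

end indicatorPair

section Icc

variable {a b : ℝ}

theorem volume_Icc_inter_Icc_neg (ha : 0 ≤ a) : volume (Icc a b ∩ Icc (-b) (-a)) = 0 := by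
  rw [Icc_inter_Icc, Real.volume_Icc, ENNReal.ofReal_eq_zero]
  linarith [min_le_right b (-a), le_max_left a (-b)]

theorem integral_norm_sq_indicatorPair_Icc (ha : 0 ≤ a) (hab : a < b) (c : ℝ) {ε : ℝ}
    (hε : ε ^ 2 = 1) :
    ∫ y, ‖indicatorPair (Icc a b) (Icc (-b) (-a)) c ε y‖ ^ 2 = c ^ 2 * (2 * (b - a)) := by
  rw [integral_norm_sq_indicatorPair measurableSet_Icc measurableSet_Icc (by simp) (by simp)
    (volume_Icc_inter_Icc_neg ha) hε, Real.volume_real_Icc_of_le hab.le,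
    Real.volume_real_Icc_of_le (by linarith)]
  ring

theorem Icc_sub_Icc_neg_union_subset :
    (Icc a b - Icc (-b) (-a)) ∪ (Icc (-b) (-a) - Icc a b) ⊆
      Icc (2 * a) (2 * b) ∪ Icc (-(2 * b)) (-(2 * a)) :=
  union_subset_union ((Icc_sub_Icc_subset _ _ _ _).trans_eq (by congr 1 <;> ring))
    ((Icc_sub_Icc_subset _ _ _ _).trans_eq (by congr 1 <;> ring))

theorem integral_cchi_Icc_mul_cchi_Icc_sub (c d x : ℝ) :
    ∫ y, cchi (Icc a b) y * cchi (Icc c d) (y - x) =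
      volume.real (Icc a b ∩ Icc (c + x) (d + x)) := by
  have hshift : ∀ y, cchi (Icc c d) (y - x) = cchi (Icc (c + x) (d + x)) y := by
    intro y
    rw [← preimage_sub_const_Icc]
    rfl
  simp only [hshift, cchi_mul_cchi]
  exact integral_cchi (measurableSet_Icc.inter measurableSet_Icc)

theorem cconv_cstar_indicatorPair_Icc_apply (ha : 0 ≤ a) (hab : a < b) (c ε : ℝ) :
    cconv (indicatorPair (Icc a b) (Icc (-b) (-a)) c ε)
      (cstar (indicatorPair (Icc a b) (Icc (-b) (-a)) c ε)) ((a + 3 * b) / 2) =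
      c ^ 2 * ε * ((b - a) / 2 : ℝ) := by
  have hx : (a + 3 * b) / 2 ∉ (Icc a b - Icc a b) ∪ (Icc (-b) (-a) - Icc (-b) (-a)) ∪
      (Icc (-b) (-a) - Icc a b) := by
    intro h
    rcases h with (h | h) | h
    all_goals
      have := Icc_sub_Icc_subset _ _ _ _ h
      simp only [mem_Icc] at this
      linarith
  rw [cconv_cstar_indicatorPair_eq_mul_integral hx, integral_cchi_Icc_mul_cchi_Icc_sub,
    Icc_inter_Icc, max_eq_right (by linarith), min_eq_left (by linarith), Real.volume_real_Icc_of_le (by linarith)]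
  push_cast
  ring

end Icc

/-- For `0 ≤ a < b`, the functions `h₁ = (χ_{[a,b]} - χ_{[-b,-a]})/√(2(b-a))` and
`h₂ = (χ_{[a,b]} + χ_{[-b,-a]})/√(2(b-a))` are unit vectors in `L²(ℝ)`, the
autocorrelations `h₁ ∗ h₁*` and `h₂ ∗ h₂*` agree outside `[2a,2b] ∪ [-2b,-2a]` but
differ at some point of `[2a,2b]`. -/
theorem stmt_8 (a b : ℝ) (ha : 0 ≤ a) (hab : a < b)
    (h₁ h₂ : ℝ → ℂ)
    (hh₁ : h₁ = fun ξ => (1 / Real.sqrt (2 * (b - a)) : ℝ) *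
      (cchi (Set.Icc a b) ξ - cchi (Set.Icc (-b) (-a)) ξ))
    (hh₂ : h₂ = fun ξ => (1 / Real.sqrt (2 * (b - a)) : ℝ) *
      (cchi (Set.Icc a b) ξ + cchi (Set.Icc (-b) (-a)) ξ)) :
    (∫ x : ℝ, ‖h₁ x‖ ^ 2) = 1 ∧ (∫ x : ℝ, ‖h₂ x‖ ^ 2) = 1 ∧
    (∀ x : ℝ, x ∉ Set.Icc (2 * a) (2 * b) ∪ Set.Icc (-(2 * b)) (-(2 * a)) →
      cconv h₁ (cstar h₁) x = cconv h₂ (cstar h₂) x) ∧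
    (∃ x ∈ Set.Icc (2 * a) (2 * b), cconv h₁ (cstar h₁) x ≠ cconv h₂ (cstar h₂) x) := by
  set c := 1 / Real.sqrt (2 * (b - a))
  have hc : c ^ 2 * (2 * (b - a)) = 1 := by
    rw [div_pow, Real.sq_sqrt (by linarith)]
    field_simp [show b - a ≠ 0 by linarith]
  have e₁ : h₁ = indicatorPair (Icc a b) (Icc (-b) (-a)) c (-1) := by
    rw [hh₁]; ext ξ; simp only [indicatorPair]; push_cast; ring
  have e₂ : h₂ = indicatorPair (Icc a b) (Icc (-b) (-a)) c 1 := by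
    rw [hh₂]; ext ξ; simp only [indicatorPair]; push_cast; ring
  have hnorm (ε : ℝ) (hε : ε ^ 2 = 1) :
      ∫ y, ‖indicatorPair (Icc a b) (Icc (-b) (-a)) c ε y‖ ^ 2 = 1 :=
    hc ▸ integral_norm_sq_indicatorPair_Icc ha hab c hε
  rw [e₁, e₂]
  refine ⟨hnorm _ (by norm_num), hnorm _ (by norm_num), fun x hx => ?_, ?_⟩
  · exact cconv_cstar_indicatorPair_eq_of_sq_eq
      (fun h => hx (Icc_sub_Icc_neg_union_subset h)) (by norm_num)
  · refine ⟨(a + 3 * b) / 2, ⟨by linarith, by linarith⟩, ?_⟩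
    rw [cconv_cstar_indicatorPair_Icc_apply ha hab, cconv_cstar_indicatorPair_Icc_apply ha hab]
    norm_cast
    intro h
    push_cast at h
    linarith
end
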